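/- arXiv:2311.06545 — 2 statements merged into one kernel-verified Lean document; each statement's English description precedes it below -/
import Mathlib

section
/- Surrogate generalization theorem: let V ⊆ Z, let G ⊆ T(V) be a subset of feasible hypotheses, and let W = {(x,y) ∈ X × Y | ∀ f ∈ G, f x = y} be the consistent set of G. If w ∈ Z \ W, then V_A is strictly contained in (V ∪ {w})_A. -/
variable {X Y : Type*}

def T (F : Set (X → Y)) (V : Set (X × Y)) : Set (X → Y) :=
  {f ∈ F | ∀ z ∈ V, f z.1 = z.2}

def gen (F : Set (X → Y)) (Z V : Set (X × Y)) : Set (X × Y) :=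
  {z ∈ Z | ∀ f ∈ T F V, f z.1 = z.2}

theorem stmt9 (F : Set (X → Y)) (Z V : Set (X × Y)) (hV : V ⊆ Z)
    (G : Set (X → Y)) (hG : G ⊆ T F V)
    (W : Set (X × Y)) (hW : W = {z : X × Y | ∀ f ∈ G, f z.1 = z.2})
    (w : X × Y) (hw : w ∈ Z \ W) :
    gen F Z V ⊂ gen F Z (V ∪ {w}) := by
  obtain ⟨hwZ, hwW⟩ := hw
  rw [hW] at hwW
  simp only [Set.mem_setOf_eq] at hwW
  push_neg at hwW
  obtain ⟨f, hfG, hfne⟩ := hwW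
  constructor
  · rintro z ⟨hzZ, hz⟩
    exact ⟨hzZ, fun g hg => hz g ⟨hg.1, fun v hv => hg.2 v (Or.inl hv)⟩⟩
  · intro h
    have : w ∈ gen F Z (V ∪ {w}) :=
      ⟨hwZ, fun g hg => hg.2 w (Or.inr rfl)⟩
    exact hfne ((h this).2 f (hG hfG))
end

section
/- Two-cover no-generalization theorem: let Z \ V = U ∪ W (as sets of samples). Suppose there exist f₁, f₂ ∈ F with f₁ correct exactly on V ∪ U (and wrong on W) and f₂ correct exactly on V ∪ W (and wrong on U). Then V_A = V. -/
variable {X Y : Type*}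

theorem stmt12 (F : Set (X → Y)) (g : X → Y) (hg : g ∈ F)
    (Z : Set (X × Y)) (hZ : Z = {p : X × Y | p.2 = g p.1})
    (V U W : Set (X × Y)) (hV : V ⊆ Z) (hUW : Z \ V = U ∪ W)
    (f₁ f₂ : X → Y) (hf₁F : f₁ ∈ F) (hf₂F : f₂ ∈ F)
    (hf₁c : ∀ z ∈ V ∪ U, f₁ z.1 = z.2) (hf₁w : ∀ z ∈ W, f₁ z.1 ≠ z.2)
    (hf₂c : ∀ z ∈ V ∪ W, f₂ z.1 = z.2) (hf₂w : ∀ z ∈ U, f₂ z.1 ≠ z.2) :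
    gen F Z V = V := by
  ext z
  constructor
  · rintro ⟨hzZ, h⟩
    by_contra hzV
    have hzUW : z ∈ U ∪ W := hUW ▸ ⟨hzZ, hzV⟩
    rcases hzUW with hU | hW
    · exact hf₂w z hU (h f₂ ⟨hf₂F, fun w hw => hf₂c w (Or.inl hw)⟩)
    · exact hf₁w z hW (h f₁ ⟨hf₁F, fun w hw => hf₁c w (Or.inl hw)⟩)
  · intro hzV
    exact ⟨hV hzV, fun f hf => hf.2 z hzV⟩
end
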